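/- Let (q_k)_{k∈ℕ} be an infinite sequence in a finite set Q, partitioned into consecutive finite nonempty blocks B_0, B_1, B_2, …. For each j let d_j = (p_j, S_j) where p_j is the first element of block B_{j+1} and S_j is the set of elements occurring in B_j together with p_j. Then a state q ∈ Q occurs infinitely often in (q_k) if and only if there exists a pair (p, S) with q ∈ S such that d_j = (p, S) for infinitely many j. -/
import Mathlib


/-- Classification of alphabet symbols: left bracket, right bracket, or neutral. -/
inductive Kind : Type
  | left | right | neutral
deriving DecidableEq

/-- The set of well-nested finite strings over an alphabet `A` classified by `k`. -/
inductive WN {A : Type} (k : A → Kind) : List A → Prop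
  | nil : WN k []
  | neutral (c : A) : k c = Kind.neutral → WN k [c]
  | append {u v : List A} : WN k u → WN k v → WN k (u ++ v)
  | enclose (l r : A) {u : List A} : k l = Kind.left → k r = Kind.right →
      WN k u → WN k (l :: u ++ [r])

/-- Elementary well-nested strings: a neutral symbol, or a well-nested string in brackets. -/
def EWN {A : Type} (k : A → Kind) : Set (List A) :=
  {w | (∃ c, k c = Kind.neutral ∧ w = [c]) ∨
       ∃ l r u, k l = Kind.left ∧ k r = Kind.right ∧ WN k u ∧ w = l :: u ++ [r]}

/-- `u` is a prefix of the infinite string `α`. -/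
def FunPrefix {A : Type} (u : List A) (α : ℕ → A) : Prop :=
  ∀ i : ℕ, ∀ h : i < u.length, u.get ⟨i, h⟩ = α i

/-- The infinite string `α` is the infinite concatenation of the finite strings `x 0, x 1, …`. -/
def Concats {A : Type} (x : ℕ → List A) (α : ℕ → A) : Prop :=
  ∀ n : ℕ, FunPrefix ((List.range n).flatMap x) α

/-- An infinite string is well-nested if it is an infinite concatenation of
elementary well-nested finite strings. -/
def WNomega {A : Type} (k : A → Kind) (α : ℕ → A) : Prop :=
  ∃ x : ℕ → List A, (∀ i, x i ∈ EWN k) ∧ Concats x α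

theorem infinitely_often_iff_block_summary
    {Q : Type} [Finite Q] (q : ℕ → Q) (t : ℕ → ℕ)
    (h0 : t 0 = 0) (hmono : ∀ j, t j < t (j + 1)) (q₀ : Q) :
    {n : ℕ | q n = q₀}.Infinite ↔
      ∃ (p : Q) (S : Set Q), q₀ ∈ S ∧
        {j : ℕ | (q (t (j + 1)), q '' Set.Icc (t j) (t (j + 1))) = (p, S)}.Infinite := by
  have hsm : StrictMono t := strictMono_nat_of_lt_succ hmono
  have hle : ∀ j, j ≤ t j := fun j => hsm.le_apply
  set d : ℕ → Q × Set Q := fun j => (q (t (j + 1)), q '' Set.Icc (t j) (t (j + 1))) with hd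
  constructor
  · intro hinf
    have hblock : ∀ n : ℕ, ∃ j, n ∈ Set.Icc (t j) (t (j + 1)) := by
      intro n
      set P : ℕ → Prop := fun j => t j ≤ n with hP
      have hP0 : P 0 := by simp [hP, h0]
      refine ⟨Nat.findGreatest P n, Nat.findGreatest_spec (Nat.zero_le n) hP0, ?_⟩
      by_contra h
      push_neg at h
      have h1 : P (Nat.findGreatest P n + 1) := le_of_lt h
      have h2 : Nat.findGreatest P n + 1 ≤ n := le_trans (hle _) h1
      exact Nat.findGreatest_is_greatest (Nat.lt_succ_self _) h2 h1
    set J : Set ℕ := {j | q₀ ∈ q '' Set.Icc (t j) (t (j + 1))} with hJ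
    have hJinf : J.Infinite := by
      intro hfin
      apply hinf
      have hsub : {n : ℕ | q n = q₀} ⊆ ⋃ j ∈ J, Set.Icc (t j) (t (j + 1)) := by
        intro n hn
        obtain ⟨j, hj⟩ := hblock n
        exact Set.mem_biUnion (⟨n, hj, hn⟩ : q₀ ∈ q '' Set.Icc (t j) (t (j + 1))) hj
      exact Set.Finite.subset (Set.Finite.biUnion hfin (fun j _ => Set.finite_Icc _ _)) hsub
    have : ∃ v : Q × Set Q, (J ∩ d ⁻¹' {v}).Infinite := by
      by_contra h
      push_neg at h
      apply hJinf
      have : J ⊆ ⋃ v : Q × Set Q, J ∩ d ⁻¹' {v} := fun j hj =>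
        Set.mem_iUnion.2 ⟨d j, hj, rfl⟩
      exact Set.Finite.subset (Set.finite_iUnion h) this
    obtain ⟨⟨p, S⟩, hv⟩ := this
    obtain ⟨j0, hj0J, hj0d⟩ := hv.nonempty
    have hdS : d j0 = (p, S) := hj0d
    refine ⟨p, S, ?_, ?_⟩
    · have : q₀ ∈ q '' Set.Icc (t j0) (t (j0 + 1)) := hj0J
      have hS : q '' Set.Icc (t j0) (t (j0 + 1)) = S := congrArg Prod.snd hdS
      exact hS ▸ this
    · exact hv.mono (fun j hj => hj.2)
  · rintro ⟨p, S, hq₀S, hinf⟩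
    apply Set.infinite_of_not_bddAbove
    rintro ⟨N, hN⟩
    obtain ⟨j, hj, hjN⟩ := hinf.exists_gt N
    have hS : q '' Set.Icc (t j) (t (j + 1)) = S := congrArg Prod.snd hj
    obtain ⟨n, hn, hqn⟩ := hS ▸ hq₀S
    have : n ≤ N := hN hqn
    exact absurd (lt_of_lt_of_le hjN (le_trans (hle j) hn.1)) (not_lt.2 this)
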